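/- Let n ≥ 2, c ∈ ℝⁿ, R > 0, and let T(x) = c + R²(x − c)/‖x − c‖² be the inversion in the sphere of center c and radius R. Let f : ℝ/ℤ → ℝⁿ be differentiable at θ₁ and at θ₂, with f(θ₁) ≠ f(θ₂), f(θ₁) ≠ c and f(θ₂) ≠ c. Then ‖(T∘f)'(θ₁)‖ ‖(T∘f)'(θ₂)‖ / ‖T(f(θ₁)) − T(f(θ₂))‖² = ‖f'(θ₁)‖ ‖f'(θ₂)‖ / ‖f(θ₁) − f(θ₂)‖²; that is, the two-point function g(θ₁,θ₂) = ‖f'(θ₁)‖‖f'(θ₂)‖/‖f(θ₁) − f(θ₂)‖² associated to a parametrized curve is invariant under sphere inversions. -/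

import Mathlib

/-!
Sphere inversion is conformal: its derivative at `x` is `(R / ‖x - c‖)²` times a reflection, so it
scales the speed of the curve at `θᵢ` by `(R / ‖f θᵢ - c‖)²`, while it scales the chord
`f θ₁ - f θ₂` by `R² / (‖f θ₁ - c‖ ‖f θ₂ - c‖)`. The square of the chord factor is the product of
the two speed factors, so the two-point function is unchanged.
-/

open EuclideanGeometry

variable {F : Type*} [NormedAddCommGroup F] [InnerProductSpace ℝ F]

theorem inversion_eq_center_add_smul (c : F) (R : ℝ) :
    inversion c R = fun x => c + (R ^ 2 / ‖x - c‖ ^ 2) • (x - c) := by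
  funext x
  rw [inversion, dist_eq_norm, div_pow, vsub_eq_sub, vadd_eq_add, add_comm]

theorem norm_deriv_inversion_comp {f : ℝ → F} {θ : ℝ} {c : F} (R : ℝ)
    (hf : DifferentiableAt ℝ f θ) (hc : f θ ≠ c) :
    ‖deriv (inversion c R ∘ f) θ‖ = (R / dist (f θ) c) ^ 2 * ‖deriv f θ‖ := by
  rw [((hasFDerivAt_inversion hc).comp_hasDerivAt θ hf.hasDerivAt).deriv]
  simp [norm_smul, div_pow]

theorem two_point_function_inversion_invariant
    (n : ℕ)
    (c : EuclideanSpace ℝ (Fin n)) (R : ℝ) (hR : 0 < R)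
    (f : ℝ → EuclideanSpace ℝ (Fin n))
    (θ₁ θ₂ : ℝ)
    (h₁ : DifferentiableAt ℝ f θ₁) (h₂ : DifferentiableAt ℝ f θ₂)
    (hc₁ : f θ₁ ≠ c) (hc₂ : f θ₂ ≠ c) :
    letI T : EuclideanSpace ℝ (Fin n) → EuclideanSpace ℝ (Fin n) :=
      fun x => c + (R ^ 2 / ‖x - c‖ ^ 2) • (x - c)
    ‖deriv (T ∘ f) θ₁‖ * ‖deriv (T ∘ f) θ₂‖ / ‖T (f θ₁) - T (f θ₂)‖ ^ 2
      = ‖deriv f θ₁‖ * ‖deriv f θ₂‖ / ‖f θ₁ - f θ₂‖ ^ 2 := by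
  rw [← inversion_eq_center_add_smul c R, ← dist_eq_norm,
    norm_deriv_inversion_comp R h₁ hc₁, norm_deriv_inversion_comp R h₂ hc₂,
    dist_inversion_inversion hc₁ hc₂]
  have hd₁ : dist (f θ₁) c ≠ 0 := dist_ne_zero.2 hc₁
  have hd₂ : dist (f θ₂) c ≠ 0 := dist_ne_zero.2 hc₂
  set K := R ^ 2 / (dist (f θ₁) c * dist (f θ₂) c)
  have hK : K ^ 2 ≠ 0 := by positivity
  calc _ = K ^ 2 * (‖deriv f θ₁‖ * ‖deriv f θ₂‖) / (K ^ 2 * dist (f θ₁) (f θ₂) ^ 2) := by ring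
    _ = _ := by rw [mul_div_mul_left _ _ hK, dist_eq_norm]
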